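/- arXiv:1207.6228 — 3 statements merged into one kernel-verified Lean document; each statement's English description precedes it below -/
import Mathlib

section
/- Let α be a finite measure on a measurable space 𝕏 with total mass a > 0, and let {Y_j, j ≥ 1} be the Pólya sequence with parameter α. For any measurable partition B_1,...,B_k of 𝕏 and nonnegative integers j_1,...,j_k with j_1 + ⋯ + j_k = n, the probability that exactly j_ℓ of Y_1,...,Y_n fall in B_ℓ for each ℓ equals the multinomial coefficient n!/(j_1!⋯j_k!) times ∏_{ℓ=1}^k (α(B_ℓ))_{j_ℓ↑} divided by (a)_{n↑}, where (x)_{m↑} := x(x+1)⋯(x+m-1) is the rising factorial. -/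
/-!
Chaining the predictive distributions along a fixed sequence of cells gives
`ℙ(Y_i ∈ B_{c_i} for all i < n) = ∏_{i<n} (α(B_{c_i}) + #{i' < i | c_{i'} = c_i}) / (a + i)`
because on the event that `Y_0, …, Y_{i-1}` lie in their prescribed cells the predictive
probability of `B_{c_i}` is this constant. Grouping the numerators by cell turns their product
into `∏_ℓ (α(B_ℓ))_{j_ℓ↑}` and the denominators multiply to `(a)_{n↑}`, so the probability of a
cell sequence depends only on its counts `j`. The event of the theorem is the disjoint union of
these cylinders over the `n!/(j_1!⋯j_k!)` cell sequences with counts `j`.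
-/

open MeasureTheory Finset
open scoped Classical

theorem ascPochhammer_eval_eq_prod_range {R : Type*} [CommSemiring R] (n : ℕ) (x : R) :
    (ascPochhammer R n).eval x = ∏ i ∈ range n, (x + i) := by
  induction n with
  | zero => simp
  | succ n ih => rw [ascPochhammer_succ_eval, ih, prod_range_succ]

theorem Finset.prod_add_card_filter_lt {ι R : Type*} [LinearOrder ι] [CommSemiring R]
    (s : Finset ι) (x : R) :
    ∏ i ∈ s, (x + #{i' ∈ s | i' < i}) = (ascPochhammer R #s).eval x := by
  induction s using Finset.induction_on_max with
  | empty => simp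
  | insert a s hs ih =>
    have ha : a ∉ s := fun h => lt_irrefl a (hs a h)
    have h_lt_a : {i' ∈ insert a s | i' < a} = s := by
      rw [filter_insert, if_neg (lt_irrefl a), filter_true_of_mem hs]
    have h_lt_i : ∀ i ∈ s, {i' ∈ insert a s | i' < i} = {i' ∈ s | i' < i} := fun i hi => by
      rw [filter_insert, if_neg (hs i hi).not_gt]
    rw [prod_insert ha, h_lt_a, card_insert_of_notMem ha, ascPochhammer_succ_eval, ← ih,
      prod_congr rfl fun i hi => by rw [h_lt_i i hi], mul_comm]

theorem prod_range_add_card_filter_eq_prod_ascPochhammer {κ R : Type*} [Fintype κ]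
    [DecidableEq κ] [CommSemiring R] (c : ℕ → κ) (g : κ → R) (n : ℕ) :
    ∏ i ∈ range n, (g (c i) + #{i' ∈ range i | c i' = c i})
      = ∏ ℓ, (ascPochhammer R #{i ∈ range n | c i = ℓ}).eval (g ℓ) := by
  rw [← prod_fiberwise_of_maps_to (g := c) (t := univ) fun i _ => mem_univ _]
  refine prod_congr rfl fun ℓ _ => ?_
  rw [← prod_add_card_filter_lt]
  refine prod_congr rfl fun i hi => ?_
  obtain ⟨hin, rfl⟩ := mem_filter.mp hi
  congr 3
  ext i'
  simp only [mem_filter, mem_range] at hin ⊢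
  grind

theorem card_filter_range_eq_card_filter_fin (n : ℕ) (p : ℕ → Prop) [DecidablePred p] :
    #{i ∈ range n | p i} = #{i : Fin n | p i} := by
  rw [card_filter, card_filter, sum_range]

theorem card_fun_with_fiber_cards_eq_multinomial {κ : Type*} [Fintype κ] [DecidableEq κ]
    {n : ℕ} (j : κ → ℕ) (hj : ∑ ℓ, j ℓ = n) :
    #{c : Fin n → κ | ∀ ℓ, #{i | c i = ℓ} = j ℓ} = Nat.multinomial univ j := by
  -- Both sides are the coefficient of `∏ X_ℓ ^ j_ℓ` in `(∑ X_ℓ) ^ n`.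
  let J : κ →₀ ℕ := Finsupp.equivFunOnFinite.symm j
  let cnt : (Fin n → κ) → κ →₀ ℕ := fun c => ∑ i, Finsupp.single (c i) 1
  have cnt_apply (c : Fin n → κ) (ℓ : κ) : cnt c ℓ = #{i | c i = ℓ} := by
    simp [cnt, Finsupp.finsetSum_apply, Finsupp.single_apply]
  have prod_X (c : Fin n → κ) :
      ∏ i, (MvPolynomial.X (c i) : MvPolynomial κ ℕ) = MvPolynomial.monomial (cnt c) 1 :=
    (MvPolynomial.monomial_sum_one _ _).symm
  have hJ : J.sum (fun _ m => m) = n := by simpa [Finsupp.sum_fintype, J] using hj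
  have key := MvPolynomial.coeff_sum_X_pow_of_fintype (R := ℕ) J n
  rw [Fintype.sum_pow, MvPolynomial.coeff_sum, if_pos hJ,
    Finsupp.multinomial_eq_of_support_subset (subset_univ _)] at key
  simp only [prod_X, MvPolynomial.coeff_monomial, sum_boole, Nat.cast_id] at key
  refine Eq.trans ?_ key
  congr! with c
  simp [Finsupp.ext_iff, cnt_apply, J]

theorem measureReal_inter_eq_mul_of_condExp_indicator_eq {Ω : Type*} {m₀ m : MeasurableSpace Ω}
    {μ : Measure[m] Ω} [IsFiniteMeasure μ] (hm : m₀ ≤ m) {s t : Set Ω}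
    (hs : MeasurableSet[m₀] s) (ht : MeasurableSet[m] t) {C : ℝ}
    (hC : ∀ᵐ ω ∂μ, ω ∈ s → μ[t.indicator 1 | m₀] ω = C) :
    μ.real (s ∩ t) = C * μ.real s := by
  calc μ.real (s ∩ t) = ∫ ω in s, t.indicator 1 ω ∂μ := by
        rw [integral_indicator_one ht, measureReal_restrict_apply ht, Set.inter_comm]
    _ = ∫ ω in s, μ[t.indicator 1 | m₀] ω ∂μ :=
        (setIntegral_condExp hm ((integrable_const 1).indicator ht) hs).symm
    _ = ∫ _ in s, C ∂μ := setIntegral_congr_ae (hm s hs) hC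
    _ = C * μ.real s := by rw [setIntegral_const, smul_eq_mul, mul_comm]

theorem sum_indicator_eq_card_filter {ι κ X : Type*} [DecidableEq κ] {B : κ → Set X}
    (hB : Pairwise (Function.onFun Disjoint B)) {s : Finset ι} {c : ι → κ} {x : ι → X}
    (hx : ∀ i ∈ s, x i ∈ B (c i)) (ℓ : κ) :
    ∑ i ∈ s, (B ℓ).indicator (fun _ => (1 : ℝ)) (x i) = #{i ∈ s | c i = ℓ} := by
  rw [card_filter, Nat.cast_sum]
  refine sum_congr rfl fun i hi => ?_
  by_cases h : c i = ℓ
  · simp [h ▸ hx i hi, h]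
  · simp [Set.indicator_of_notMem (Set.disjoint_left.mp (hB h) (hx i hi)), h]

theorem measurableSet_comap_cylinder {Ω X κ : Type*} [MeasurableSpace X] {Y : ℕ → Ω → X}
    {B : κ → Set X} (hB : ∀ ℓ, MeasurableSet (B ℓ)) (c : ℕ → κ) (m : ℕ) :
    MeasurableSet[MeasurableSpace.comap (fun ω (i : Fin m) => Y (i : ℕ) ω) MeasurableSpace.pi]
      {ω | ∀ i < m, Y i ω ∈ B (c i)} :=
  ⟨Set.univ.pi fun i => B (c i), .univ_pi fun _ => hB _, by ext; simp [Fin.forall_iff]⟩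

structure IsPolyaSequence {Ω X : Type*} [MeasurableSpace Ω] [MeasurableSpace X]
    (μ : Measure Ω) (α : Measure X) (Y : ℕ → Ω → X) : Prop where
  measurable : ∀ j, Measurable (Y j)
  map_zero : μ.map (Y 0) = (α Set.univ)⁻¹ • α
  condExp_indicator : ∀ (j : ℕ) (A : Set X), MeasurableSet A →
    (μ[fun ω => A.indicator (fun _ => (1 : ℝ)) (Y (j + 1) ω) |
        MeasurableSpace.comap (fun ω (i : Fin (j + 1)) => Y (i : ℕ) ω) MeasurableSpace.pi])
      =ᵐ[μ] fun ω =>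
        ((α A).toReal + ∑ i ∈ range (j + 1), A.indicator (fun _ => (1 : ℝ)) (Y i ω)) /
          ((α Set.univ).toReal + (j + 1))

namespace IsPolyaSequence

variable {Ω X κ : Type*} [MeasurableSpace Ω] [MeasurableSpace X] {μ : Measure Ω}
  [IsProbabilityMeasure μ] {α : Measure X} {Y : ℕ → Ω → X} {B : κ → Set X}

theorem measureReal_cylinder_succ [DecidableEq κ] (hP : IsPolyaSequence μ α Y)
    (hB : ∀ ℓ, MeasurableSet (B ℓ)) (hdisj : Pairwise (Function.onFun Disjoint B))
    (c : ℕ → κ) (m : ℕ) :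
    μ.real {ω | ∀ i < m + 1, Y i ω ∈ B (c i)} = μ.real {ω | ∀ i < m, Y i ω ∈ B (c i)} *
      (((α (B (c m))).toReal + #{i ∈ range m | c i = c m}) / ((α Set.univ).toReal + m)) := by
  have hsplit : {ω | ∀ i < m + 1, Y i ω ∈ B (c i)} =
      {ω | ∀ i < m, Y i ω ∈ B (c i)} ∩ Y m ⁻¹' B (c m) := by
    ext ω
    simp only [Set.mem_ofPred_eq, Set.mem_inter_iff, Set.mem_preimage,
      Nat.lt_succ_iff_lt_or_eq, or_imp, forall_and, forall_eq]
  rw [hsplit]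
  cases m with
  | zero =>
    have h0 := hP.map_zero ▸ Measure.map_apply (μ := μ) (hP.measurable 0) (hB (c 0))
    simp [measureReal_def, ← h0, div_eq_inv_mul]
  | succ m =>
    have hm := (measurable_pi_iff.mpr fun i : Fin (m + 1) => hP.measurable i).comap_le
    rw [mul_comm]
    refine measureReal_inter_eq_mul_of_condExp_indicator_eq hm
      (measurableSet_comap_cylinder hB c (m + 1)) (hP.measurable _ (hB _)) ?_
    filter_upwards [hP.condExp_indicator m (B (c (m + 1))) (hB _)] with ω hω hωs
    have hind : (Y (m + 1) ⁻¹' B (c (m + 1))).indicator 1 =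
        fun ω => (B (c (m + 1))).indicator (fun _ => (1 : ℝ)) (Y (m + 1) ω) := rfl
    rw [hind, hω, sum_indicator_eq_card_filter hdisj (fun i hi => hωs i (mem_range.mp hi))]
    push_cast
    ring

theorem measureReal_cylinder_eq_prod [DecidableEq κ] (hP : IsPolyaSequence μ α Y)
    (hB : ∀ ℓ, MeasurableSet (B ℓ)) (hdisj : Pairwise (Function.onFun Disjoint B))
    (c : ℕ → κ) (m : ℕ) :
    μ.real {ω | ∀ i < m, Y i ω ∈ B (c i)} = ∏ i ∈ range m,
      ((α (B (c i))).toReal + #{i' ∈ range i | c i' = c i}) / ((α Set.univ).toReal + i) := by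
  induction m with
  | zero => simp
  | succ m ih => rw [hP.measureReal_cylinder_succ hB hdisj, ih, prod_range_succ]

theorem measureReal_cylinder [Fintype κ] [DecidableEq κ] (hP : IsPolyaSequence μ α Y)
    (hB : ∀ ℓ, MeasurableSet (B ℓ)) (hdisj : Pairwise (Function.onFun Disjoint B))
    (c : ℕ → κ) (n : ℕ) :
    μ.real {ω | ∀ i < n, Y i ω ∈ B (c i)} =
      (∏ ℓ, (ascPochhammer ℝ #{i ∈ range n | c i = ℓ}).eval (α (B ℓ)).toReal) /
        (ascPochhammer ℝ n).eval (α Set.univ).toReal := by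
  rw [hP.measureReal_cylinder_eq_prod hB hdisj, prod_div_distrib,
    prod_range_add_card_filter_eq_prod_ascPochhammer c (fun ℓ => (α (B ℓ)).toReal),
    ascPochhammer_eval_eq_prod_range]

theorem measureReal_cylinder_fin [Fintype κ] [DecidableEq κ] [Nonempty κ]
    (hP : IsPolyaSequence μ α Y) (hB : ∀ ℓ, MeasurableSet (B ℓ))
    (hdisj : Pairwise (Function.onFun Disjoint B)) {n : ℕ} (c : Fin n → κ) :
    μ.real {ω | ∀ i : Fin n, Y i ω ∈ B (c i)} =
      (∏ ℓ, (ascPochhammer ℝ #{i | c i = ℓ}).eval (α (B ℓ)).toReal) /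
        (ascPochhammer ℝ n).eval (α Set.univ).toReal := by
  obtain ⟨ℓ₀⟩ := ‹Nonempty κ›
  set c' : ℕ → κ := Function.extend Fin.val c fun _ => ℓ₀
  have hc' (i : Fin n) : c' i = c i := Fin.val_injective.extend_apply c _ i
  have hevent :
      {ω | ∀ i : Fin n, Y i ω ∈ B (c i)} = {ω | ∀ i < n, Y i ω ∈ B (c' i)} :=
    Set.ext fun ω => ⟨fun h i hi => hc' ⟨i, hi⟩ ▸ h ⟨i, hi⟩, fun h i => hc' i ▸ h i i.2⟩
  have hcount (ℓ : κ) : #{i ∈ range n | c' i = ℓ} = #{i | c i = ℓ} := by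
    simp only [card_filter_range_eq_card_filter_fin, hc']
  simp only [hevent, hP.measureReal_cylinder hB hdisj, hcount]

end IsPolyaSequence

theorem measure_card_filter_mem_eq_sum_cylinder {Ω X κ : Type*} [MeasurableSpace Ω]
    [MeasurableSpace X] [Fintype κ] [DecidableEq κ] (μ : Measure Ω) {Y : ℕ → Ω → X}
    (hY : ∀ i, Measurable (Y i)) {B : κ → Set X} (hB : ∀ ℓ, MeasurableSet (B ℓ))
    (hdisj : Pairwise (Function.onFun Disjoint B)) (hcov : ⋃ ℓ, B ℓ = Set.univ) (n : ℕ)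
    (j : κ → ℕ) :
    μ {ω | ∀ ℓ, #{i ∈ range n | Y i ω ∈ B ℓ} = j ℓ} =
      ∑ c : Fin n → κ with ∀ ℓ, #{i | c i = ℓ} = j ℓ,
        μ {ω | ∀ i : Fin n, Y i ω ∈ B (c i)} := by
  choose cell hcell using fun x => Set.mem_iUnion.mp (hcov.symm ▸ Set.mem_univ x)
  have mem_iff (x : X) (ℓ : κ) : x ∈ B ℓ ↔ cell x = ℓ := by
    refine ⟨fun hx => ?_, fun h => h ▸ hcell x⟩
    by_contra h
    exact Set.disjoint_left.mp (hdisj h) (hcell x) hx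
  let L : Ω → Fin n → κ := fun ω i => cell (Y i ω)
  have hcyl (c : Fin n → κ) : L ⁻¹' {c} = {ω | ∀ i : Fin n, Y i ω ∈ B (c i)} := by
    ext ω
    simp [L, funext_iff, mem_iff]
  have hmeas (c : Fin n → κ) : MeasurableSet (L ⁻¹' {c}) := by
    rw [hcyl, Set.ofPred_forall]
    exact .iInter fun i => hY i (hB _)
  calc μ {ω | ∀ ℓ, #{i ∈ range n | Y i ω ∈ B ℓ} = j ℓ}
      = μ (L ⁻¹' ({c : Fin n → κ | ∀ ℓ, #{i | c i = ℓ} = j ℓ} : Finset _)) := by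
        congr 1
        ext ω
        simp [L, mem_iff, card_filter_range_eq_card_filter_fin]
    _ = _ := by
        rw [← sum_measure_preimage_singleton _ fun c _ => hmeas c]
        simp only [hcyl]

theorem polya_partition_counts_general
    {X : Type*} [MeasurableSpace X]
    {Ω : Type*} [MeasurableSpace Ω] {μpr : Measure Ω} [IsProbabilityMeasure μpr]
    (α : Measure X)
    (Y : ℕ → Ω → X) (hYmeas : ∀ j, Measurable (Y j))
    (hY0 : Measure.map (Y 0) μpr = (α Set.univ)⁻¹ • α)
    (hpred : ∀ (j : ℕ) (A : Set X), MeasurableSet A →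
      (μpr[fun ω => Set.indicator A (fun _ => (1 : ℝ)) (Y (j + 1) ω) |
          MeasurableSpace.comap (fun ω (i : Fin (j + 1)) => Y (i : ℕ) ω) MeasurableSpace.pi])
        =ᵐ[μpr] fun ω =>
          ((α A).toReal + ∑ i ∈ Finset.range (j + 1),
              Set.indicator A (fun _ => (1 : ℝ)) (Y i ω)) / ((α Set.univ).toReal + (j + 1)))
    (n k : ℕ) (B : Fin k → Set X) (hB : ∀ ℓ, MeasurableSet (B ℓ))
    (hdisj : Pairwise (Function.onFun Disjoint B)) (hcov : (⋃ ℓ, B ℓ) = Set.univ)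
    (j : Fin k → ℕ) (hj : ∑ ℓ, j ℓ = n) :
    μpr {ω | ∀ ℓ : Fin k,
        ((Finset.range n).filter fun i => Y i ω ∈ B ℓ).card = j ℓ}
      = ENNReal.ofReal ((Nat.multinomial Finset.univ j : ℝ) *
          (∏ ℓ, (ascPochhammer ℝ (j ℓ)).eval (α (B ℓ)).toReal) /
            (ascPochhammer ℝ n).eval (α Set.univ).toReal) := by
  have hP : IsPolyaSequence μpr α Y := ⟨hYmeas, hY0, hpred⟩
  obtain ⟨ω₀⟩ := nonempty_of_isProbabilityMeasure μpr
  obtain ⟨ℓ₀, -⟩ := Set.mem_iUnion.mp (hcov.symm ▸ Set.mem_univ (Y 0 ω₀))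
  have : Nonempty (Fin k) := ⟨ℓ₀⟩
  have hcyl (c : Fin n → Fin k) (hc : ∀ ℓ, #{i | c i = ℓ} = j ℓ) :
      μpr {ω | ∀ i : Fin n, Y i ω ∈ B (c i)} = ENNReal.ofReal
        ((∏ ℓ, (ascPochhammer ℝ (j ℓ)).eval (α (B ℓ)).toReal) /
          (ascPochhammer ℝ n).eval (α Set.univ).toReal) := by
    rw [← ENNReal.ofReal_toReal (measure_ne_top μpr _), ← measureReal_def,
      hP.measureReal_cylinder_fin hB hdisj c]
    simp only [hc]
  rw [measure_card_filter_mem_eq_sum_cylinder μpr hYmeas hB hdisj hcov n j,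
    sum_eq_card_nsmul fun c hc => hcyl c (by simpa using hc),
    card_fun_with_fiber_cards_eq_multinomial j hj, nsmul_eq_mul, ← ENNReal.ofReal_natCast,
    ← ENNReal.ofReal_mul (Nat.cast_nonneg _), mul_div_assoc]

/-- For a Pólya sequence `{Y_j}` with parameter measure `α` of total mass
`a > 0` (characterized by its initial distribution `α/a` and its predictive distributions),
and any measurable partition `B_1, …, B_k` of `𝕏`, the probability that exactly `j_ℓ` of
`Y_0, …, Y_{n-1}` fall in `B_ℓ` for each `ℓ` equals
`(n choose j_1 … j_k) ∏_ℓ (α(B_ℓ))_{j_ℓ↑} / (a)_{n↑}` (rising factorials). -/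
theorem polya_partition_counts
    {X : Type*} [MeasurableSpace X]
    {Ω : Type*} [MeasurableSpace Ω] {μpr : Measure Ω} [IsProbabilityMeasure μpr]
    (α : Measure X) [IsFiniteMeasure α] (ha : 0 < (α Set.univ).toReal)
    (Y : ℕ → Ω → X) (hYmeas : ∀ j, Measurable (Y j))
    (hY0 : Measure.map (Y 0) μpr = (α Set.univ)⁻¹ • α)
    (hpred : ∀ (j : ℕ) (A : Set X), MeasurableSet A →
      (μpr[fun ω => Set.indicator A (fun _ => (1 : ℝ)) (Y (j + 1) ω) |
          MeasurableSpace.comap (fun ω (i : Fin (j + 1)) => Y (i : ℕ) ω) MeasurableSpace.pi])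
        =ᵐ[μpr] fun ω =>
          ((α A).toReal + ∑ i ∈ Finset.range (j + 1),
              Set.indicator A (fun _ => (1 : ℝ)) (Y i ω)) / ((α Set.univ).toReal + (j + 1)))
    (n k : ℕ) (B : Fin k → Set X) (hB : ∀ ℓ, MeasurableSet (B ℓ))
    (hdisj : Pairwise (Function.onFun Disjoint B)) (hcov : (⋃ ℓ, B ℓ) = Set.univ)
    (j : Fin k → ℕ) (hj : ∑ ℓ, j ℓ = n) :
    μpr {ω | ∀ ℓ : Fin k,
        ((Finset.range n).filter fun i => Y i ω ∈ B ℓ).card = j ℓ}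
      = ENNReal.ofReal ((Nat.multinomial Finset.univ j : ℝ) *
          (∏ ℓ, (ascPochhammer ℝ (j ℓ)).eval (α (B ℓ)).toReal) /
            (ascPochhammer ℝ n).eval (α Set.univ).toReal) :=
  polya_partition_counts_general α Y hYmeas hY0 hpred n k B hB hdisj hcov j hj
end

section
/- With C_n^{(s_1,s_2)} := ∑_{j_1+j_2=n} (n choose j_1) (α_1)_{j_1↑}(α_2)_{j_2↑}/(a)_{n↑} · (j_1)_{s_1↓}(j_2)_{s_2↓} as above, the recursion C_{n+1}^{(s_1,s_2)} = ((n+1)(α_1+s_1-1)/(a+n)) C_n^{(s_1-1,s_2)} + ((n+1)/(a+n)) C_n^{(s_1,s_2)} holds for all integers s_1 ≥ 1, s_2 ≥ 0 and n ≥ 0. -/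
/-!
Write `C_n^{(s₁,s₂)} = N_n^{(s₁,s₂)}(α₁, α₂) / (a)_{n↑}`. Absorbing the factor `j₁` of
`(j₁)_{s₁↓}` into `(n+1 choose j₁)` and `(α₁)_{j₁↑}` gives
`N_{n+1}^{(s₁,s₂)}(α₁, α₂) = (n+1) α₁ N_n^{(s₁-1,s₂)}(α₁+1, α₂)`, and splitting
`α₁ + j₁ = (α₁ + s₁ - 1) + (j₁ - s₁ + 1)` inside `α₁ (α₁+1)_{j₁↑} = (α₁)_{j₁↑} (α₁ + j₁)` turns the
right-hand side into the two numerators of the recursion. Dividing by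
`(a)_{(n+1)↑} = (a)_{n↑} (a + n)` finishes the proof.
-/

open Finset

/-- The joint factorial-moment quantity
`C_n^{(s₁,s₂)} = ∑_{j₁+j₂=n} (n choose j₁) (α₁)_{j₁↑}(α₂)_{j₂↑}/(a)_{n↑} (j₁)_{s₁↓}(j₂)_{s₂↓}`
of the bivariate Pólya (Beta-binomial) distribution. -/
noncomputable def polyaC (α₁ α₂ : ℝ) (n s₁ s₂ : ℕ) : ℝ :=
  ∑ j ∈ Finset.range (n + 1),
    (n.choose j : ℝ) *
      ((ascPochhammer ℝ j).eval α₁ * (ascPochhammer ℝ (n - j)).eval α₂ /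
        (ascPochhammer ℝ n).eval (α₁ + α₂)) *
      ((descPochhammer ℝ s₁).eval (j : ℝ) * (descPochhammer ℝ s₂).eval ((n - j : ℕ) : ℝ))

open Polynomial

theorem ascPochhammer_succ_eval_left {S : Type*} [CommSemiring S] (n : ℕ) (x : S) :
    (ascPochhammer S (n + 1)).eval x = x * (ascPochhammer S n).eval (x + 1) := by
  rw [ascPochhammer_succ_left, eval_mul, eval_comp]
  simp

theorem descPochhammer_succ_eval_left {R : Type*} [CommRing R] (n : ℕ) (x : R) :
    (descPochhammer R (n + 1)).eval x = x * (descPochhammer R n).eval (x - 1) := by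
  rw [descPochhammer_succ_left, eval_mul, eval_comp]
  simp

section PolyaNumerator

variable {R : Type*} [CommRing R]

noncomputable def polyaNumerator (x y : R) (n s₁ s₂ : ℕ) : R :=
  ∑ j ∈ range (n + 1),
    (n.choose j : R) * ((ascPochhammer R j).eval x * (ascPochhammer R (n - j)).eval y) *
      ((descPochhammer R s₁).eval (j : R) * (descPochhammer R s₂).eval ((n - j : ℕ) : R))

theorem polyaNumerator_succ_succ (x y : R) (n s₁ s₂ : ℕ) :
    polyaNumerator x y (n + 1) (s₁ + 1) s₂ = (n + 1) * x * polyaNumerator (x + 1) y n s₁ s₂ := by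
  rw [polyaNumerator, sum_range_succ', polyaNumerator, mul_sum]
  simp only [Nat.cast_zero, descPochhammer_succ_eval_left (x := (0 : R)), zero_mul, mul_zero,
    add_zero, Nat.add_sub_add_right]
  refine sum_congr rfl fun j _ => ?_
  have hchoose : ((n + 1).choose (j + 1) : R) * (j + 1) = (n + 1) * n.choose j := by
    exact_mod_cast congrArg (Nat.cast : ℕ → R) (Nat.add_one_mul_choose_eq n j).symm
  rw [ascPochhammer_succ_eval_left, descPochhammer_succ_eval_left, Nat.cast_succ,
    add_sub_cancel_right]
  linear_combination
    x * (ascPochhammer R j).eval (x + 1) * (ascPochhammer R (n - j)).eval y *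
      (descPochhammer R s₁).eval (j : R) * (descPochhammer R s₂).eval ((n - j : ℕ) : R) * hchoose

theorem mul_polyaNumerator_add_one (x y : R) (n s₁ s₂ : ℕ) :
    x * polyaNumerator (x + 1) y n s₁ s₂
      = (x + s₁) * polyaNumerator x y n s₁ s₂ + polyaNumerator x y n (s₁ + 1) s₂ := by
  simp only [polyaNumerator, mul_sum, ← sum_add_distrib]
  refine sum_congr rfl fun j _ => ?_
  have hasc : x * (ascPochhammer R j).eval (x + 1) = (ascPochhammer R j).eval x * (x + j) := by
    rw [← ascPochhammer_succ_eval_left, ascPochhammer_succ_eval]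
  rw [descPochhammer_succ_eval]
  linear_combination
    (n.choose j : R) * (ascPochhammer R (n - j)).eval y * (descPochhammer R s₁).eval (j : R) *
      (descPochhammer R s₂).eval ((n - j : ℕ) : R) * hasc

end PolyaNumerator

theorem polyaC_eq_polyaNumerator_div (α₁ α₂ : ℝ) (n s₁ s₂ : ℕ) :
    polyaC α₁ α₂ n s₁ s₂
      = polyaNumerator α₁ α₂ n s₁ s₂ / (ascPochhammer ℝ n).eval (α₁ + α₂) := by
  rw [polyaC, polyaNumerator, sum_div]
  exact sum_congr rfl fun j _ => by ring

/-- The recursion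
`C_{n+1}^{(s₁,s₂)} = ((n+1)(α₁+s₁-1)/(a+n)) C_n^{(s₁-1,s₂)} + ((n+1)/(a+n)) C_n^{(s₁,s₂)}`
holds for all integers `s₁ ≥ 1`, `s₂ ≥ 0` and `n ≥ 0`, where `a = α₁ + α₂`. -/
theorem polyaC_recursion (α₁ α₂ : ℝ) (h₁ : 0 < α₁) (h₂ : 0 < α₂)
    (n s₁ s₂ : ℕ) (hs₁ : 1 ≤ s₁) :
    polyaC α₁ α₂ (n + 1) s₁ s₂
      = ((n + 1 : ℝ) * (α₁ + s₁ - 1) / (α₁ + α₂ + n)) * polyaC α₁ α₂ n (s₁ - 1) s₂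
        + ((n + 1 : ℝ) / (α₁ + α₂ + n)) * polyaC α₁ α₂ n s₁ s₂ := by
  obtain ⟨t, rfl⟩ : ∃ t, s₁ = t + 1 := ⟨s₁ - 1, by omega⟩
  have ha : 0 < α₁ + α₂ := add_pos h₁ h₂
  have hpoch : (ascPochhammer ℝ n).eval (α₁ + α₂) ≠ 0 := (ascPochhammer_pos n _ ha).ne'
  have han : α₁ + α₂ + n ≠ 0 := by positivity
  have hnum := mul_polyaNumerator_add_one α₁ α₂ n t s₂
  simp only [polyaC_eq_polyaNumerator_div, polyaNumerator_succ_succ, ascPochhammer_succ_eval,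
    Nat.add_sub_cancel, Nat.cast_succ]
  field_simp
  linear_combination hnum
end

section
/- Fix n ≥ 1, a > 0, and let E[|Y|] < ∞ where Y has distribution α_0. Consider the Markov chain M_m = θ_m ∑_{i=1}^n q_{m,i} Y_{m,i} + (1-θ_m) M_{m-1}, with θ_m ~ Beta(n,a), (q_{m,1},...,q_{m,n}) ~ Dirichlet(1,...,1), and (Y_{m,1},...,Y_{m,n}) from a Pólya sequence with parameter α = a·α_0, all independent across m and of each other. Then for V(x) = 1 + |x|, the one-step transition kernel p satisfies the drift inequality pV(x) ≤ 1 + (n/(n+a))E[|Y_{1,1}|] + (a/(n+a))|x| for all x ∈ ℝ; in particular, for any λ ∈ (a/(n+a), 1), pV(x) ≤ λ V(x) for all |x| > K^{(n)}(λ) := (1 - λ + (n/(n+a))E[|Y_{1,1}|])/(λ - a/(n+a)). -/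
/-!
For `θ ∈ (0,1)` and weights `q` in the simplex, the triangle inequality gives
`|θ ∑ qᵢ Yᵢ + (1 - θ) x| ≤ θ ∑ qᵢ |Yᵢ| + (1 - θ) |x|`. Taking expectations and using the
independence of `θ`, `q` and `Y`, the right side has mean `E θ · ∑ E qᵢ · E|Y| + (1 - E θ)|x|`,
where `∑ E qᵢ = 1` and `E θ = n / (n + a)` is the mean of `Beta(n, a)`. The bound `λ V(x)` for
large `|x|` is a rearrangement of this inequality.
-/

open MeasureTheory ProbabilityTheory

/-- The Beta(a, b) distribution on ℝ, supported on (0,1). -/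
noncomputable def betaMeasure (a b : ℝ) : Measure ℝ :=
  volume.withDensity fun x =>
    ENNReal.ofReal (Set.indicator (Set.Ioo 0 1)
      (fun y => Real.Gamma (a + b) / (Real.Gamma a * Real.Gamma b) *
        y ^ (a - 1) * (1 - y) ^ (b - 1)) x)

/-- The Dirichlet(1,…,1) distribution on the probability simplex of `Fin n → ℝ`. -/
noncomputable def dirichletOnes (n : ℕ) : Measure (Fin n → ℝ) :=
  Measure.map (fun (x : Fin (n - 1) → ℝ) (i : Fin n) =>
      if h : (i : ℕ) < n - 1 then x ⟨i, h⟩ else 1 - ∑ j, x j)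
    ((n - 1).factorial •
      volume.restrict {x : Fin (n - 1) → ℝ | (∀ i, 0 ≤ x i) ∧ ∑ i, x i ≤ 1})

namespace ProbabilityTheory

open Set

lemma intervalIntegral_rpow_mul_one_sub_rpow {α β : ℝ} (hα : 0 < α) (hβ : 0 < β) :
    ∫ x in (0 : ℝ)..1, x ^ (α - 1) * (1 - x) ^ (β - 1) = beta α β := by
  have hcast : Complex.betaIntegral α β =
      ((∫ x in (0 : ℝ)..1, x ^ (α - 1) * (1 - x) ^ (β - 1) : ℝ) : ℂ) := by
    rw [Complex.betaIntegral, ← intervalIntegral.integral_ofReal]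
    refine intervalIntegral.integral_congr fun x hx => ?_
    rw [uIcc_of_le zero_le_one] at hx
    simp only [Complex.ofReal_mul, Complex.ofReal_cpow hx.1,
      Complex.ofReal_cpow (sub_nonneg.mpr hx.2)]
    push_cast
    ring
  rw [beta_eq_betaIntegralReal α β hα hβ, hcast, Complex.ofReal_re]

lemma beta_add_one_left {α β : ℝ} (hα : 0 < α) (hβ : 0 < β) :
    beta (α + 1) β = α / (α + β) * beta α β := by
  have hαβ : 0 < α + β := add_pos hα hβ
  rw [beta, beta, add_right_comm, Real.Gamma_add_one hα.ne', Real.Gamma_add_one hαβ.ne']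
  field_simp [(Real.Gamma_pos_of_pos hαβ).ne']

lemma betaPDFReal_of_notMem_Ioo {α β x : ℝ} (hx : x ∉ Ioo 0 1) : betaPDFReal α β x = 0 :=
  if_neg hx

lemma betaPDFReal_nonneg {α β : ℝ} (hα : 0 < α) (hβ : 0 < β) (x : ℝ) :
    0 ≤ betaPDFReal α β x := by
  by_cases hx : x ∈ Ioo 0 1
  · exact (betaPDFReal_pos hx.1 hx.2 hα hβ).le
  · rw [betaPDFReal_of_notMem_Ioo hx]

lemma ae_mem_Ioo_betaMeasure (α β : ℝ) : ∀ᵐ x ∂betaMeasure α β, x ∈ Ioo 0 1 := by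
  refine (ae_withDensity_iff (measurable_betaPDFReal α β).ennreal_ofReal).mpr
    (ae_of_all _ fun x hx => ?_)
  by_contra hx'
  exact hx (by simp only [betaPDFReal_of_notMem_Ioo hx', ENNReal.ofReal_zero])

lemma integral_id_betaMeasure {α β : ℝ} (hα : 0 < α) (hβ : 0 < β) :
    ∫ x, x ∂betaMeasure α β = α / (α + β) := by
  have hdensity : ∀ x ∈ Ioo (0 : ℝ) 1,
      betaPDFReal α β x * x = (beta α β)⁻¹ * (x ^ (α + 1 - 1) * (1 - x) ^ (β - 1)) := by
    intro x hx
    rw [betaPDFReal, if_pos (mem_Ioo.mp hx), show α + 1 - 1 = α - 1 + 1 by ring,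
      Real.rpow_add_one hx.1.ne']
    ring
  calc ∫ x, x ∂betaMeasure α β = ∫ x, betaPDFReal α β x * x := by
        rw [betaMeasure, integral_withDensity_eq_integral_toReal_smul (f := betaPDF α β)
          (measurable_betaPDFReal α β).ennreal_ofReal (ae_of_all _ fun _ => ENNReal.ofReal_lt_top)]
        simp only [betaPDF, ENNReal.toReal_ofReal (betaPDFReal_nonneg hα hβ _), smul_eq_mul]
    _ = ∫ x in Ioo 0 1, betaPDFReal α β x * x := by
        refine (setIntegral_eq_integral_of_forall_compl_eq_zero fun x hx => ?_).symm
        rw [betaPDFReal_of_notMem_Ioo hx, zero_mul]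
    _ = (beta α β)⁻¹ * ∫ x in (0 : ℝ)..1, x ^ (α + 1 - 1) * (1 - x) ^ (β - 1) := by
        rw [setIntegral_congr_fun measurableSet_Ioo hdensity, integral_const_mul,
          intervalIntegral.integral_of_le zero_le_one, integral_Ioc_eq_integral_Ioo]
    _ = α / (α + β) := by
        rw [intervalIntegral_rpow_mul_one_sub_rpow (by linarith) hβ, beta_add_one_left hα hβ]
        field_simp [(beta_pos hα hβ).ne']

end ProbabilityTheory

lemma betaMeasure_eq_betaMeasure (a b : ℝ) :
    _root_.betaMeasure a b = ProbabilityTheory.betaMeasure a b := by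
  refine congrArg volume.withDensity (funext fun x => congrArg ENNReal.ofReal ?_)
  simp only [Set.indicator_apply, Set.mem_Ioo, betaPDFReal, beta, one_div_div]

lemma measurable_dirichletOnes_chart (n : ℕ) :
    Measurable fun (x : Fin (n - 1) → ℝ) (i : Fin n) =>
      if h : (i : ℕ) < n - 1 then x ⟨i, h⟩ else 1 - ∑ j, x j := by
  refine measurable_pi_lambda _ fun i => ?_
  by_cases h : (i : ℕ) < n - 1
  · simpa only [dif_pos h] using measurable_pi_apply _
  · simp only [dif_neg h]
    fun_prop

lemma ae_mem_stdSimplex_dirichletOnes {n : ℕ} (hn : n ≠ 0) :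
    ∀ᵐ v ∂dirichletOnes n, v ∈ stdSimplex ℝ (Fin n) := by
  obtain ⟨m, rfl⟩ := Nat.exists_eq_add_one_of_ne_zero hn
  rw [dirichletOnes, ae_map_iff (p := (· ∈ stdSimplex ℝ (Fin (m + 1))))
    (measurable_dirichletOnes_chart _).aemeasurable (isClosed_stdSimplex ℝ _).measurableSet]
  refine Measure.ae_smul_measure (ae_restrict_of_forall_mem (by measurability) fun x hx => ?_) _
  refine ⟨fun i => ?_, ?_⟩
  · dsimp only
    split_ifs
    · exact hx.1 _
    · linarith [hx.2]
  · simp [Fin.sum_univ_castSucc]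

lemma norm_le_one_of_mem_Icc {t : ℝ} (ht : t ∈ Set.Icc 0 1) : ‖t‖ ≤ 1 := by
  rw [Real.norm_of_nonneg ht.1]
  exact ht.2

lemma abs_sum_mul_le_of_mem_stdSimplex {ι : Type*} [Fintype ι] {w : ι → ℝ}
    (hw : w ∈ stdSimplex ℝ ι) (y : ι → ℝ) : |∑ i, w i * y i| ≤ ∑ i, w i * |y i| := by
  refine (Finset.abs_sum_le_sum_abs _ _).trans_eq (Finset.sum_congr rfl fun i _ => ?_)
  rw [abs_mul, abs_of_nonneg (hw.1 i)]

section RandomWeights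

variable {Ω ι : Type*} [MeasurableSpace Ω] {μ : Measure Ω} [Fintype ι] {q Y : ι → Ω → ℝ}

lemma ae_norm_le_one_of_mem_stdSimplex (hq : ∀ᵐ ω ∂μ, (fun i => q i ω) ∈ stdSimplex ℝ ι)
    (i : ι) : ∀ᵐ ω ∂μ, ‖q i ω‖ ≤ 1 :=
  hq.mono fun _ hω => norm_le_one_of_mem_Icc (mem_Icc_of_mem_stdSimplex hω i)

lemma integrable_sum_mul_of_mem_stdSimplex (hq : ∀ᵐ ω ∂μ, (fun i => q i ω) ∈ stdSimplex ℝ ι)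
    (hqm : ∀ i, AEStronglyMeasurable (q i) μ) (hY : ∀ i, Integrable (Y i) μ) :
    Integrable (fun ω => ∑ i, q i ω * Y i ω) μ :=
  integrable_finsetSum _ fun i _ =>
    (hY i).bdd_mul (hqm i) (ae_norm_le_one_of_mem_stdSimplex hq i)

lemma integral_abs_sum_mul_le [IsProbabilityMeasure μ]
    (hq : ∀ᵐ ω ∂μ, (fun i => q i ω) ∈ stdSimplex ℝ ι)
    (hqm : ∀ i, AEStronglyMeasurable (q i) μ) (hY : ∀ i, Integrable (Y i) μ)
    (hind : ∀ i, IndepFun (q i) (Y i) μ) {I : ℝ} (hI : ∀ i, ∫ ω, |Y i ω| ∂μ = I) :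
    ∫ ω, |∑ i, q i ω * Y i ω| ∂μ ≤ I := by
  have hq_int : ∀ i, Integrable (q i) μ := fun i =>
    .of_bound (hqm i) 1 (ae_norm_le_one_of_mem_stdSimplex hq i)
  have hq_sum : ∫ ω, ∑ i, q i ω ∂μ = 1 := by
    rw [integral_congr_ae (hq.mono fun _ hω => hω.2), integral_const, probReal_univ, one_smul]
  calc ∫ ω, |∑ i, q i ω * Y i ω| ∂μ ≤ ∫ ω, ∑ i, q i ω * |Y i ω| ∂μ :=
        integral_mono_ae (integrable_sum_mul_of_mem_stdSimplex hq hqm hY).abs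
          (integrable_sum_mul_of_mem_stdSimplex hq hqm fun i => (hY i).abs)
          (hq.mono fun ω hω => abs_sum_mul_le_of_mem_stdSimplex hω _)
    _ = ∑ i, (∫ ω, q i ω ∂μ) * I := by
        rw [integral_finsetSum]
        · refine Finset.sum_congr rfl fun i _ => ?_
          have hind_abs : IndepFun (q i) (fun ω => |Y i ω|) μ :=
            (hind i).comp measurable_id measurable_abs
          rw [hind_abs.integral_fun_mul_eq_mul_integral (hqm i) (hY i).abs.1, hI i]
        · exact fun i _ => (hY i).abs.bdd_mul (hqm i) (ae_norm_le_one_of_mem_stdSimplex hq i)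
    _ = I := by
        rw [← Finset.sum_mul, ← integral_finsetSum _ fun i _ => hq_int i, hq_sum, one_mul]

end RandomWeights

section RandomInterpolation

variable {Ω : Type*} [MeasurableSpace Ω] {μ : Measure Ω} [IsProbabilityMeasure μ]

lemma integral_one_add_abs_mul_add_one_sub_mul_le {θ Z : Ω → ℝ}
    (hθ : ∀ᵐ ω ∂μ, θ ω ∈ Set.Icc 0 1) (hθm : AEStronglyMeasurable θ μ) (hZ : Integrable Z μ)
    (hind : IndepFun θ Z μ) (x : ℝ) :
    ∫ ω, (1 + |θ ω * Z ω + (1 - θ ω) * x|) ∂μ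
      ≤ 1 + (∫ ω, θ ω ∂μ) * (∫ ω, |Z ω| ∂μ) + (1 - ∫ ω, θ ω ∂μ) * |x| := by
  have hθ_int : Integrable θ μ := .of_bound hθm 1 (hθ.mono fun _ => norm_le_one_of_mem_Icc)
  have hθZ_int : Integrable (fun ω => θ ω * |Z ω|) μ :=
    hZ.abs.bdd_mul hθm (hθ.mono fun _ => norm_le_one_of_mem_Icc)
  have h1θ_int : Integrable (fun ω => (1 - θ ω) * |x|) μ :=
    ((integrable_const 1).sub hθ_int).mul_const _
  have hbound_int : Integrable (fun ω => θ ω * |Z ω| + (1 - θ ω) * |x|) μ := hθZ_int.add h1θ_int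
  have hind_abs : IndepFun θ (fun ω => |Z ω|) μ := hind.comp measurable_id measurable_abs
  have hpointwise : ∀ᵐ ω ∂μ, 1 + |θ ω * Z ω + (1 - θ ω) * x|
      ≤ 1 + (θ ω * |Z ω| + (1 - θ ω) * |x|) := hθ.mono fun ω hω => by
    grw [abs_add_le, abs_mul, abs_mul, abs_of_nonneg hω.1, abs_of_nonneg (sub_nonneg.2 hω.2)]
  calc ∫ ω, (1 + |θ ω * Z ω + (1 - θ ω) * x|) ∂μ
        ≤ ∫ ω, (1 + (θ ω * |Z ω| + (1 - θ ω) * |x|)) ∂μ :=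
        integral_mono_of_nonneg (ae_of_all _ fun _ => by positivity)
          ((integrable_const 1).add hbound_int) hpointwise
    _ = 1 + (∫ ω, θ ω ∂μ) * (∫ ω, |Z ω| ∂μ) + (1 - ∫ ω, θ ω ∂μ) * |x| := by
        rw [integral_add (integrable_const 1) hbound_int, integral_add hθZ_int h1θ_int,
          hind_abs.integral_fun_mul_eq_mul_integral hθm hZ.abs.1,
          integral_mul_const, integral_sub (integrable_const 1) hθ_int]
        simp only [integral_const, probReal_univ, one_smul]
        ring

end RandomInterpolation

lemma one_add_add_mul_le_mul_one_add {b d l r : ℝ} (hdl : d < l)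
    (hr : (1 - l + b) / (l - d) < r) : 1 + b + d * r ≤ l * (1 + r) := by
  have := (div_lt_iff₀ (sub_pos.2 hdl)).1 hr
  linarith

theorem drift_condition_mean_chain_general
    {Ω : Type*} [MeasurableSpace Ω] {μpr : Measure Ω} [IsProbabilityMeasure μpr]
    (n : ℕ) (hn : 1 ≤ n) (a : ℝ) (ha : 0 < a)
    (μ₀ : Measure ℝ)
    (θ : Ω → ℝ) (q : Fin n → Ω → ℝ) (Y : Fin n → Ω → ℝ)
    (hθmeas : Measurable θ) (hqmeas : ∀ i, Measurable (q i)) (hYmeas : ∀ i, Measurable (Y i))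
    (hθ : Measure.map θ μpr = _root_.betaMeasure n a)
    (hq : Measure.map (fun ω (i : Fin n) => q i ω) μpr = dirichletOnes n)
    (hY : ∀ i, Measure.map (Y i) μpr = μ₀)
    (hYint : ∀ i, Integrable (Y i) μpr)
    (hind₁ : IndepFun θ (fun ω => ((fun i => q i ω), (fun i => Y i ω))) μpr)
    (hind₂ : IndepFun (fun ω (i : Fin n) => q i ω) (fun ω (i : Fin n) => Y i ω) μpr) :
    (∀ x : ℝ, ∫ ω, (1 + |θ ω * ∑ i, q i ω * Y i ω + (1 - θ ω) * x|) ∂μpr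
        ≤ 1 + ((n : ℝ) / (n + a)) * (∫ y, |y| ∂μ₀) + (a / (n + a)) * |x|) ∧
    ∀ l ∈ Set.Ioo (a / (n + a)) 1, ∀ x : ℝ,
      (1 - l + ((n : ℝ) / (n + a)) * ∫ y, |y| ∂μ₀) / (l - a / (n + a)) < |x| →
      ∫ ω, (1 + |θ ω * ∑ i, q i ω * Y i ω + (1 - θ ω) * x|) ∂μpr ≤ l * (1 + |x|) := by
  have hn₀ : (0 : ℝ) < n := by exact_mod_cast hn
  rw [betaMeasure_eq_betaMeasure] at hθ
  have hθ_ae : ∀ᵐ ω ∂μpr, θ ω ∈ Set.Icc 0 1 := ae_of_ae_map hθmeas.aemeasurable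
    (hθ ▸ (ae_mem_Ioo_betaMeasure _ _).mono fun _ h => Set.Ioo_subset_Icc_self h)
  have hq_ae : ∀ᵐ ω ∂μpr, (fun i => q i ω) ∈ stdSimplex ℝ (Fin n) :=
    ae_of_ae_map (measurable_pi_lambda _ hqmeas).aemeasurable
      (hq ▸ ae_mem_stdSimplex_dirichletOnes (by omega))
  have hEθ : ∫ ω, θ ω ∂μpr = n / (n + a) := calc
    ∫ ω, θ ω ∂μpr = ∫ t, t ∂μpr.map θ :=
      (integral_map hθmeas.aemeasurable aestronglyMeasurable_id).symm
    _ = n / (n + a) := by rw [hθ, integral_id_betaMeasure hn₀ ha]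
  have hE_absY : ∀ i, ∫ ω, |Y i ω| ∂μpr = ∫ y, |y| ∂μ₀ := fun i => by
    rw [← hY i, integral_map (hYmeas i).aemeasurable measurable_abs.aestronglyMeasurable]
  have hqm : ∀ i, AEStronglyMeasurable (q i) μpr := fun i => (hqmeas i).aestronglyMeasurable
  have hE_absZ := integral_abs_sum_mul_le hq_ae hqm hYint
    (fun i => hind₂.comp (measurable_pi_apply i) (measurable_pi_apply i)) hE_absY
  have drift : ∀ x : ℝ, ∫ ω, (1 + |θ ω * ∑ i, q i ω * Y i ω + (1 - θ ω) * x|) ∂μpr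
      ≤ 1 + ((n : ℝ) / (n + a)) * (∫ y, |y| ∂μ₀) + (a / (n + a)) * |x| := fun x => by
    have h := integral_one_add_abs_mul_add_one_sub_mul_le hθ_ae hθmeas.aestronglyMeasurable
      (integrable_sum_mul_of_mem_stdSimplex hq_ae hqm hYint) (hind₁.comp measurable_id
        (by fun_prop : Measurable fun p : (Fin n → ℝ) × (Fin n → ℝ) => ∑ i, p.1 i * p.2 i)) x
    rw [hEθ, show 1 - (n : ℝ) / (n + a) = a / (n + a) by field_simp; ring] at h
    grw [h, hE_absZ]
  exact ⟨drift, fun l hl x hx => (drift x).trans (one_add_add_mul_le_mul_one_add hl.1 hx)⟩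

/-- Foster–Lyapunov drift inequality for the generalized Feigin–Tweedie
mean chain. With `θ ~ Beta(n,a)`, `q ~ Dirichlet(1,…,1)`, `Y_i` marginally `α₀` with finite
mean, all independent, the one-step expectation of `V(x) = 1 + |x|` along
`x ↦ θ ∑ q_i Y_i + (1-θ) x` is bounded by `1 + (n/(n+a)) E|Y| + (a/(n+a))|x|`; in particular
for `λ ∈ (a/(n+a), 1)` it is at most `λ V(x)` whenever `|x| > K^{(n)}(λ)`. -/
theorem drift_condition_mean_chain
    {Ω : Type*} [MeasurableSpace Ω] {μpr : Measure Ω} [IsProbabilityMeasure μpr]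
    (n : ℕ) (hn : 1 ≤ n) (a : ℝ) (ha : 0 < a)
    (μ₀ : Measure ℝ) [IsProbabilityMeasure μ₀] (hμ₀ : Integrable (fun y => |y|) μ₀)
    (θ : Ω → ℝ) (q : Fin n → Ω → ℝ) (Y : Fin n → Ω → ℝ)
    (hθmeas : Measurable θ) (hqmeas : ∀ i, Measurable (q i)) (hYmeas : ∀ i, Measurable (Y i))
    (hθ : Measure.map θ μpr = _root_.betaMeasure n a)
    (hq : Measure.map (fun ω (i : Fin n) => q i ω) μpr = dirichletOnes n)
    (hY : ∀ i, Measure.map (Y i) μpr = μ₀)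
    (hYint : ∀ i, Integrable (Y i) μpr)
    (hind₁ : IndepFun θ (fun ω => ((fun i => q i ω), (fun i => Y i ω))) μpr)
    (hind₂ : IndepFun (fun ω (i : Fin n) => q i ω) (fun ω (i : Fin n) => Y i ω) μpr) :
    (∀ x : ℝ, ∫ ω, (1 + |θ ω * ∑ i, q i ω * Y i ω + (1 - θ ω) * x|) ∂μpr
        ≤ 1 + ((n : ℝ) / (n + a)) * (∫ y, |y| ∂μ₀) + (a / (n + a)) * |x|) ∧
    ∀ l ∈ Set.Ioo (a / (n + a)) 1, ∀ x : ℝ,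
      (1 - l + ((n : ℝ) / (n + a)) * ∫ y, |y| ∂μ₀) / (l - a / (n + a)) < |x| →
      ∫ ω, (1 + |θ ω * ∑ i, q i ω * Y i ω + (1 - θ ω) * x|) ∂μpr ≤ l * (1 + |x|) :=
  drift_condition_mean_chain_general n hn a ha μ₀ θ q Y hθmeas hqmeas hYmeas hθ hq hY hYint hind₁
    hind₂
end
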